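/- Second identity of Lemma 3.1: let ψ : ℝ × ℝ^d → ℝ be continuously differentiable, c : ℝ^d → ℝ twice continuously differentiable, and define the density s(a) by 1/s(a) = (1+a)/(2ρ₁) + (1−a)/(2ρ₂) and Ψ(a,q) = s(a) ψ(a,q). Fix x ∈ ℝ^d such that (1+c(x))/(2ρ₁) + (1−c(x))/(2ρ₂) ≠ 0 and assume the vector fields y ↦ ∂₂Ψ(c(y), ∇c(y)) and y ↦ s(c(y)) ∂₂ψ(c(y), ∇c(y)) are differentiable at x. Define μ̌(x) = ∂₁Ψ(c(x), ∇c(x)) − div[y ↦ ∂₂Ψ(c(y), ∇c(y))](x) and μ̌̌(x) = ∂₁ψ(c(x), ∇c(x)) − (1/s(c(x))) div[y ↦ s(c(y)) ∂₂ψ(c(y), ∇c(y))](x). Then μ̌(x) = s(c(x)) μ̌̌(x) − β s(c(x))² ψ(c(x), ∇c(x)), where β = (ρ₂ − ρ₁)/(2ρ₁ρ₂). -/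

import Mathlib

/-- The spatial gradient of a scalar field on `ℝ^d`. -/
noncomputable def grad {d : ℕ} (f : (Fin d → ℝ) → ℝ) (x : Fin d → ℝ) : Fin d → ℝ :=
  fun i => fderiv ℝ f x (Pi.single i 1)

/-- The divergence `∑ i, ∂ᵢ Fᵢ` of a vector field on `ℝ^d`. -/
noncomputable def diver {d : ℕ} (F : (Fin d → ℝ) → (Fin d → ℝ)) (x : Fin d → ℝ) : ℝ :=
  ∑ i, fderiv ℝ F x (Pi.single i 1) i

/-- The partial derivative of `Ψ : ℝ × ℝ^d → ℝ` in the scalar slot. -/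
noncomputable def d1 {d : ℕ} (Ψ : ℝ × (Fin d → ℝ) → ℝ) (a : ℝ) (q : Fin d → ℝ) : ℝ :=
  fderiv ℝ Ψ (a, q) (1, 0)

/-- The partial gradient of `Ψ : ℝ × ℝ^d → ℝ` in the vector slot. -/
noncomputable def d2 {d : ℕ} (Ψ : ℝ × (Fin d → ℝ) → ℝ) (a : ℝ) (q : Fin d → ℝ) :
    Fin d → ℝ :=
  fun i => fderiv ℝ Ψ (a, q) (0, Pi.single i 1)

/-!
Since `1/s` is affine in the concentration with slope `β`, the density obeys `s' = -β s²`, so the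
product rule for `Ψ = s ψ` gives `∂₁Ψ = s ∂₁ψ - β s² ψ` and `∂₂Ψ = s ∂₂ψ`. The latter holds
wherever `1/s(c) ≠ 0`, which is a neighbourhood of `x`; hence the two flux fields agree near `x`,
have the same divergence there, and the identity reduces to algebra.
-/

open Filter Topology

lemma hasDerivAt_density {ρ₁ ρ₂ : ℝ} (hρ₁ : ρ₁ ≠ 0) (hρ₂ : ρ₂ ≠ 0) {s : ℝ → ℝ}
    (hs : ∀ a, s a = ((1 + a) / (2 * ρ₁) + (1 - a) / (2 * ρ₂))⁻¹) {a : ℝ}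
    (ha : (1 + a) / (2 * ρ₁) + (1 - a) / (2 * ρ₂) ≠ 0) :
    HasDerivAt s (-((ρ₂ - ρ₁) / (2 * ρ₁ * ρ₂)) * s a ^ 2) a := by
  have hr : HasDerivAt (fun t : ℝ => (1 + t) / (2 * ρ₁) + (1 - t) / (2 * ρ₂))
      ((ρ₂ - ρ₁) / (2 * ρ₁ * ρ₂)) a :=
    ((((hasDerivAt_id' a).const_add 1).div_const (2 * ρ₁)).add
      (((hasDerivAt_id' a).const_sub 1).div_const (2 * ρ₂))).congr_deriv (by field_simp; ring)
  obtain rfl : s = _ := funext hs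
  rw [inv_pow, ← div_eq_mul_inv]
  exact hr.inv ha

section ScalarFactor

variable {d : ℕ} {g : ℝ → ℝ} {ψ : ℝ × (Fin d → ℝ) → ℝ} {a : ℝ} {q : Fin d → ℝ}

lemma hasFDerivAt_comp_fst_mul {g' : ℝ} (hg : HasDerivAt g g' a)
    (hψ : DifferentiableAt ℝ ψ (a, q)) :
    HasFDerivAt (fun p => g p.1 * ψ p)
      (g a • fderiv ℝ ψ (a, q) + ψ (a, q) • g' • ContinuousLinearMap.fst ℝ ℝ (Fin d → ℝ))
      (a, q) :=
  (hg.comp_hasFDerivAt (a, q) hasFDerivAt_fst).mul hψ.hasFDerivAt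

lemma d1_comp_fst_mul {g' : ℝ} (hg : HasDerivAt g g' a) (hψ : DifferentiableAt ℝ ψ (a, q)) :
    d1 (fun p => g p.1 * ψ p) a q = g a * d1 ψ a q + g' * ψ (a, q) := by
  simp [d1, (hasFDerivAt_comp_fst_mul hg hψ).fderiv, mul_comm]

lemma d2_comp_fst_mul (hg : DifferentiableAt ℝ g a) (hψ : DifferentiableAt ℝ ψ (a, q)) :
    d2 (fun p => g p.1 * ψ p) a q = g a • d2 ψ a q := by
  funext i
  simp [d2, (hasFDerivAt_comp_fst_mul hg.hasDerivAt hψ).fderiv]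

end ScalarFactor

lemma Filter.EventuallyEq.diver_eq {d : ℕ} {F G : (Fin d → ℝ) → Fin d → ℝ} {x : Fin d → ℝ}
    (h : F =ᶠ[𝓝 x] G) : diver F x = diver G x := by
  simp only [diver, h.fderiv_eq]

theorem chemical_potential_identity_two_general
    {d : ℕ} (ρ₁ ρ₂ : ℝ) (hρ₁ : 0 < ρ₁) (hρ₂ : 0 < ρ₂)
    (ψ : ℝ × (Fin d → ℝ) → ℝ) (hψ : ContDiff ℝ 1 ψ)
    (c : (Fin d → ℝ) → ℝ) (hc : ContDiff ℝ 2 c)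
    (s : ℝ → ℝ) (hs : ∀ a, s a = ((1 + a) / (2 * ρ₁) + (1 - a) / (2 * ρ₂))⁻¹)
    (Ψ : ℝ × (Fin d → ℝ) → ℝ) (hΨ : ∀ a q, Ψ (a, q) = s a * ψ (a, q))
    (x : Fin d → ℝ)
    (hsx : (1 + c x) / (2 * ρ₁) + (1 - c x) / (2 * ρ₂) ≠ 0) :
    d1 Ψ (c x) (grad c x) - diver (fun y => d2 Ψ (c y) (grad c y)) x =
      s (c x) *
        (d1 ψ (c x) (grad c x)
          - (1 / s (c x)) * diver (fun y => s (c y) • d2 ψ (c y) (grad c y)) x)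
      - ((ρ₂ - ρ₁) / (2 * ρ₁ * ρ₂)) * (s (c x)) ^ 2 * ψ (c x, grad c x) := by
  obtain rfl : Ψ = fun p => s p.1 * ψ p := funext fun p => hΨ p.1 p.2
  have hψ' : Differentiable ℝ ψ := hψ.differentiable one_ne_zero
  have hflux : (fun y => d2 (fun p => s p.1 * ψ p) (c y) (grad c y))
      =ᶠ[𝓝 x] fun y => s (c y) • d2 ψ (c y) (grad c y) := by
    have hr : Continuous fun y => (1 + c y) / (2 * ρ₁) + (1 - c y) / (2 * ρ₂) := by
      have := hc.continuous
      fun_prop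
    filter_upwards [hr.continuousAt.eventually_ne hsx] with y hy
    exact d2_comp_fst_mul (hasDerivAt_density hρ₁.ne' hρ₂.ne' hs hy).differentiableAt (hψ' _)
  have hsx' : s (c x) ≠ 0 := by
    rw [hs]
    exact inv_ne_zero hsx
  rw [hflux.diver_eq, d1_comp_fst_mul (hasDerivAt_density hρ₁.ne' hρ₂.ne' hs hsx) (hψ' _)]
  field_simp
  ring

/-- **Second identity of Lemma 3.1.**
Let `ψ` be a `C¹` mass-measure-based free energy, `c` a `C²` concentration
field, `s(a)` the density defined by `1/s(a) = (1+a)/(2ρ₁) + (1-a)/(2ρ₂)`, and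
`Ψ(a,q) = s(a) ψ(a,q)` the associated volume-measure-based free energy.  If the
reciprocal density is nonzero at `x` and the two flux fields are differentiable
at `x`, then the chemical potentials
`μ̌(x) = ∂₁Ψ(c,∇c) - div(∂₂Ψ(c,∇c))` and
`μ̌̌(x) = ∂₁ψ(c,∇c) - (1/s(c)) div(s(c) ∂₂ψ(c,∇c))` satisfy
`μ̌ = s(c) μ̌̌ - β s(c)² ψ(c,∇c)` with `β = (ρ₂-ρ₁)/(2ρ₁ρ₂)`. -/
theorem chemical_potential_identity_two
    {d : ℕ} (ρ₁ ρ₂ : ℝ) (hρ₁ : 0 < ρ₁) (hρ₂ : 0 < ρ₂)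
    (ψ : ℝ × (Fin d → ℝ) → ℝ) (hψ : ContDiff ℝ 1 ψ)
    (c : (Fin d → ℝ) → ℝ) (hc : ContDiff ℝ 2 c)
    (s : ℝ → ℝ) (hs : ∀ a, s a = ((1 + a) / (2 * ρ₁) + (1 - a) / (2 * ρ₂))⁻¹)
    (Ψ : ℝ × (Fin d → ℝ) → ℝ) (hΨ : ∀ a q, Ψ (a, q) = s a * ψ (a, q))
    (x : Fin d → ℝ)
    (hsx : (1 + c x) / (2 * ρ₁) + (1 - c x) / (2 * ρ₂) ≠ 0)
    (hF1 : DifferentiableAt ℝ (fun y => d2 Ψ (c y) (grad c y)) x)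
    (hF2 : DifferentiableAt ℝ (fun y => s (c y) • d2 ψ (c y) (grad c y)) x) :
    d1 Ψ (c x) (grad c x) - diver (fun y => d2 Ψ (c y) (grad c y)) x =
      s (c x) *
        (d1 ψ (c x) (grad c x)
          - (1 / s (c x)) * diver (fun y => s (c y) • d2 ψ (c y) (grad c y)) x)
      - ((ρ₂ - ρ₁) / (2 * ρ₁ * ρ₂)) * (s (c x)) ^ 2 * ψ (c x, grad c x) :=
  chemical_potential_identity_two_general ρ₁ ρ₂ hρ₁ hρ₂ ψ hψ c hc s hs Ψ hΨ x hsx
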